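/- Let X be a real random variable, δ > 0 and t ≥ δ. Then Var(g_t(X)) ≤ 4 Var(X 1_{{|X| ≤ δ}}) + 4 t E[|X| 1_{{|X| > δ}}] + 2 t² P{|X| > t}. -/

import Mathlib

open MeasureTheory ProbabilityTheory

/-- Truncation at level `ℓ`: `g_ℓ(x) = (x ∧ ℓ) ∨ (-ℓ)`. -/
noncomputable def truncAt (l x : ℝ) : ℝ := max (min x l) (-l)

lemma abs_truncAt_le {l : ℝ} (hl : 0 ≤ l) (x : ℝ) : |truncAt l x| ≤ l := by
  rw [abs_le, truncAt]
  constructor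
  · exact le_max_right _ _
  · exact max_le (min_le_right _ _) (by linarith)

lemma abs_truncAt_le_abs {l : ℝ} (hl : 0 ≤ l) (x : ℝ) : |truncAt l x| ≤ |x| := by
  rw [abs_le, truncAt]
  constructor
  · refine le_trans ?_ (le_max_left _ _)
    exact le_min (neg_abs_le x) (by have := abs_nonneg x; linarith)
  · exact max_le (le_trans (min_le_left _ _) (le_abs_self x))
      (by have := abs_nonneg x; linarith)

lemma truncAt_eq_self {l x : ℝ} (h : |x| ≤ l) : truncAt l x = x := by
  rw [abs_le] at h
  rw [truncAt, min_eq_left h.2, max_eq_left h.1]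

lemma variance_le_integral_sq_sub {Ω : Type*} [MeasurableSpace Ω]
    {μ : Measure Ω} [IsProbabilityMeasure μ] {Y : Ω → ℝ} (hY : MemLp Y 2 μ) (c : ℝ) :
    variance Y μ ≤ ∫ ω, (Y ω - c) ^ 2 ∂μ := by
  have h2 : MemLp (fun ω => Y ω - c) 2 μ := hY.sub (memLp_const c)
  have key : variance Y μ = variance (fun ω => Y ω - c) μ := by
    rw [variance_eq_sub hY, variance_eq_sub h2]
    have hYi : Integrable Y μ := hY.integrable one_le_two
    have h1 : ∫ ω, (Y ω - c) ∂μ = (∫ ω, Y ω ∂μ) - c := by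
      rw [integral_sub hYi (integrable_const c), integral_const]; simp
    simp only [Pi.pow_apply]
    have h2' : ∫ ω, (Y ω - c) ^ 2 ∂μ
        = (∫ ω, Y ω ^ 2 ∂μ) - 2 * c * (∫ ω, Y ω ∂μ) + c ^ 2 := by
      have heq : ∀ ω, (Y ω - c) ^ 2 = Y ω ^ 2 - 2 * c * Y ω + c ^ 2 := fun ω => by ring
      have hint1 : Integrable (fun ω => Y ω ^ 2 - 2 * c * Y ω) μ := by
        exact hY.integrable_sq.sub (hYi.const_mul (2 * c))
      rw [integral_congr_ae (ae_of_all _ heq),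
        integral_add hint1 (integrable_const _),
        integral_sub hY.integrable_sq (hYi.const_mul (2 * c)), integral_const_mul, integral_const]
      simp
    rw [h2', h1]
    ring
  calc variance Y μ = variance (fun ω => Y ω - c) μ := key
    _ ≤ ∫ ω, ((fun ω => Y ω - c) ^ 2) ω ∂μ := variance_le_expectation_sq h2.aestronglyMeasurable
    _ = ∫ ω, (Y ω - c) ^ 2 ∂μ := rfl

/-- `Var(g_t(X)) ≤ 4 Var(X 1_{|X|≤δ}) + 4 t E[|X| 1_{|X|>δ}] + 2 t² P{|X| > t}`,
stated in `[0,∞]` since `E[|X| 1_{|X|>δ}]` may be infinite. -/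
theorem variance_trunc_le' {Ω : Type*} [MeasurableSpace Ω]
    (μ : Measure Ω) [IsProbabilityMeasure μ]
    (X : Ω → ℝ) (hmeas : Measurable X) (δ t : ℝ) (hδ : 0 < δ) (ht : δ ≤ t) :
    ENNReal.ofReal (variance (fun ω => truncAt t (X ω)) μ)
      ≤ ENNReal.ofReal (4 * variance (fun ω => if |X ω| ≤ δ then X ω else 0) μ)
        + ENNReal.ofReal (4 * t) *
            ∫⁻ ω, ENNReal.ofReal (if δ < |X ω| then |X ω| else 0) ∂μ
        + ENNReal.ofReal (2 * t ^ 2) * μ {ω | t < |X ω|} := by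
  have htpos : 0 < t := lt_of_lt_of_le hδ ht
  set Y : Ω → ℝ := fun ω => truncAt t (X ω) with hYdef
  set Z : Ω → ℝ := fun ω => if |X ω| ≤ δ then X ω else 0 with hZdef
  set W : Ω → ℝ := fun ω => if δ < |X ω| then |X ω| else 0 with hWdef
  have hWnn : ∀ ω, 0 ≤ W ω := by
    intro ω; simp only [hWdef]; split_ifs with h
    · exact abs_nonneg _
    · exact le_refl 0
  have hYmeas : Measurable Y := ((hmeas.min measurable_const).max measurable_const)
  have hZmeas : Measurable Z :=
    Measurable.ite (measurableSet_le hmeas.abs measurable_const) hmeas measurable_const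
  have hWmeas : Measurable W :=
    Measurable.ite (measurableSet_lt measurable_const hmeas.abs) hmeas.abs measurable_const
  by_cases hL : (∫⁻ ω, ENNReal.ofReal (if δ < |X ω| then |X ω| else 0) ∂μ) = ⊤
  · rw [hL, ENNReal.mul_top (by simp [ENNReal.ofReal_eq_zero]; linarith)]
    simp
  -- Finite case
  have hWint : Integrable W μ := by
    refine ⟨hWmeas.aestronglyMeasurable, ?_⟩
    rw [HasFiniteIntegral]
    have : ∀ ω, ‖W ω‖ₑ = ENNReal.ofReal (W ω) := fun ω =>
      Real.enorm_eq_ofReal (hWnn ω)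
    simpa only [this] using lt_top_iff_ne_top.mpr hL
  set I := ∫ ω, W ω ∂μ with hIdef
  have hInn : 0 ≤ I := integral_nonneg hWnn
  have hLI : (∫⁻ ω, ENNReal.ofReal (W ω) ∂μ) = ENNReal.ofReal I :=
    (ofReal_integral_eq_lintegral_ofReal hWint (ae_of_all _ hWnn)).symm
  -- MemLp facts
  have hY2 : MemLp Y 2 μ :=
    MemLp.of_bound hYmeas.aestronglyMeasurable t
      (ae_of_all _ fun ω => by simpa using abs_truncAt_le htpos.le (X ω))
  have hZ2 : MemLp Z 2 μ :=
    MemLp.of_bound hZmeas.aestronglyMeasurable δ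
      (ae_of_all _ fun ω => by
        simp only [hZdef, Real.norm_eq_abs]
        split_ifs with h
        · exact h
        · simpa using hδ.le)
  set c := ∫ ω, Z ω ∂μ with hcdef
  -- pointwise bound (Y - Z)^2 ≤ t * W
  have hpt : ∀ ω, (Y ω - Z ω) ^ 2 ≤ t * W ω := by
    intro ω
    simp only [hYdef, hZdef, hWdef]
    by_cases h : |X ω| ≤ δ
    · rw [if_pos h, if_neg (not_lt.mpr h), truncAt_eq_self (le_trans h ht)]
      simp
    · rw [if_neg h, if_pos (not_le.mp h), sub_zero]
      have h1 : |truncAt t (X ω)| ≤ t := abs_truncAt_le htpos.le (X ω)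
      have h2 : |truncAt t (X ω)| ≤ |X ω| := abs_truncAt_le_abs htpos.le (X ω)
      have h3 : 0 ≤ |truncAt t (X ω)| := abs_nonneg _
      nlinarith [sq_abs (truncAt t (X ω)), htpos.le]
  -- key real inequality
  have hdiff2 : Integrable (fun ω => (Y ω - Z ω) ^ 2) μ := by
    have := (hY2.sub hZ2).integrable_sq
    simpa [Pi.sub_apply] using this
  have hZc2 : Integrable (fun ω => (Z ω - c) ^ 2) μ := by
    have := (hZ2.sub (memLp_const c)).integrable_sq
    simpa using this
  have step1 : variance Y μ ≤ ∫ ω, (Y ω - c) ^ 2 ∂μ := variance_le_integral_sq_sub hY2 c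
  have step2 : ∫ ω, (Y ω - c) ^ 2 ∂μ
      ≤ 2 * (∫ ω, (Y ω - Z ω) ^ 2 ∂μ) + 2 * (∫ ω, (Z ω - c) ^ 2 ∂μ) := by
    have hmono : ∀ ω, (Y ω - c) ^ 2 ≤ 2 * (Y ω - Z ω) ^ 2 + 2 * (Z ω - c) ^ 2 := by
      intro ω
      nlinarith [sq_nonneg (Y ω - Z ω - (Z ω - c))]
    calc ∫ ω, (Y ω - c) ^ 2 ∂μ
        ≤ ∫ ω, (2 * (Y ω - Z ω) ^ 2 + 2 * (Z ω - c) ^ 2) ∂μ := by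
          refine integral_mono ?_ ?_ hmono
          · have := (hY2.sub (memLp_const c)).integrable_sq
            simpa using this
          · exact (hdiff2.const_mul 2).add (hZc2.const_mul 2)
      _ = 2 * (∫ ω, (Y ω - Z ω) ^ 2 ∂μ) + 2 * (∫ ω, (Z ω - c) ^ 2 ∂μ) := by
          rw [integral_add (hdiff2.const_mul 2) (hZc2.const_mul 2),
            integral_const_mul, integral_const_mul]
  have step3 : ∫ ω, (Y ω - Z ω) ^ 2 ∂μ ≤ t * I := by
    calc ∫ ω, (Y ω - Z ω) ^ 2 ∂μ ≤ ∫ ω, t * W ω ∂μ :=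
          integral_mono hdiff2 (hWint.const_mul t) hpt
      _ = t * I := integral_const_mul t W
  have step4 : ∫ ω, (Z ω - c) ^ 2 ∂μ = variance Z μ := by
    rw [variance_eq_integral hZ2.aestronglyMeasurable.aemeasurable]
  have hreal : variance Y μ
      ≤ 4 * variance Z μ + 4 * t * I + 2 * t ^ 2 * (μ {ω | t < |X ω|}).toReal := by
    have hvarZ : 0 ≤ variance Z μ := variance_nonneg _ _
    have hP : 0 ≤ (μ {ω | t < |X ω|}).toReal := ENNReal.toReal_nonneg
    calc variance Y μ ≤ ∫ ω, (Y ω - c) ^ 2 ∂μ := step1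
      _ ≤ 2 * (∫ ω, (Y ω - Z ω) ^ 2 ∂μ) + 2 * (∫ ω, (Z ω - c) ^ 2 ∂μ) := step2
      _ ≤ 2 * (t * I) + 2 * variance Z μ := by rw [step4]; nlinarith
      _ ≤ 4 * variance Z μ + 4 * t * I + 2 * t ^ 2 * (μ {ω | t < |X ω|}).toReal := by
        nlinarith [mul_nonneg htpos.le hInn, mul_nonneg (mul_nonneg (by norm_num : (0:ℝ) ≤ 2) (sq_nonneg t)) hP]
  -- convert to ENNReal
  have hPne : μ {ω | t < |X ω|} ≠ ⊤ := measure_ne_top μ _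
  calc ENNReal.ofReal (variance Y μ)
      ≤ ENNReal.ofReal (4 * variance Z μ + 4 * t * I
          + 2 * t ^ 2 * (μ {ω | t < |X ω|}).toReal) := ENNReal.ofReal_le_ofReal hreal
    _ = ENNReal.ofReal (4 * variance Z μ) + ENNReal.ofReal (4 * t * I)
          + ENNReal.ofReal (2 * t ^ 2 * (μ {ω | t < |X ω|}).toReal) := by
        have n1 : 0 ≤ 4 * variance Z μ := by
          have := variance_nonneg Z μ; linarith
        have n2 : 0 ≤ 4 * t * I :=
          mul_nonneg (mul_nonneg (by norm_num) htpos.le) hInn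
        have n3 : 0 ≤ 2 * t ^ 2 * (μ {ω | t < |X ω|}).toReal :=
          mul_nonneg (by positivity) ENNReal.toReal_nonneg
        rw [ENNReal.ofReal_add (add_nonneg n1 n2) n3, ENNReal.ofReal_add n1 n2]
    _ = ENNReal.ofReal (4 * variance Z μ)
          + ENNReal.ofReal (4 * t) * (∫⁻ ω, ENNReal.ofReal (W ω) ∂μ)
          + ENNReal.ofReal (2 * t ^ 2) * μ {ω | t < |X ω|} := by
        have e2 : ENNReal.ofReal (4 * t * I) = ENNReal.ofReal (4 * t) * ENNReal.ofReal I :=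
          ENNReal.ofReal_mul (mul_nonneg (by norm_num) htpos.le)
        have e3 : ENNReal.ofReal (2 * t ^ 2 * (μ {ω | t < |X ω|}).toReal)
            = ENNReal.ofReal (2 * t ^ 2) * μ {ω | t < |X ω|} := by
          rw [ENNReal.ofReal_mul (by positivity), ENNReal.ofReal_toReal hPne]
        rw [e2, e3, ← hLI]
    _ = _ := rfl
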